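/- arXiv:1712.03168 — 2 statements merged into one kernel-verified Lean document; each statement's English description precedes it below -/
import Mathlib

section
/- Let q ∈ (0, 1/2] and let N ≥ 1 be an integer. For every finite list (n_1,…,n_I) of positive integers with n_1 + … + n_I = N, one has q^{−n_1} + … + q^{−n_I} ≥ N/q. Moreover, if q < 1/2 and some part n_i ≥ 2, the inequality is strict; that is, for q < 1/2 the unique optimal composition under policy A is N parts of size 1 (individual testing). -/
/-- The cost of a list of group sizes: `q^{-n_1} + ⋯ + q^{-n_I}`. -/
noncomputable def cost (q : ℝ) (l : List ℕ) : ℝ := (l.map fun n => q ^ (-(n : ℝ))).sum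

/-!
With `x = q⁻¹ ≥ 2`, a part of size `n` costs `xⁿ` against its share `n x` of `N / q`, and
`n x ≤ 2ⁿ⁻¹ x ≤ xⁿ`. Both inequalities are strict when `x > 2` and `n ≥ 2`, so summing over the
parts gives the claim.
-/

section PowBounds

variable {R : Type*} [Semiring R] [LinearOrder R] [IsStrictOrderedRing R] {x : R}

theorem nat_mul_le_pow (hx : 2 ≤ x) : ∀ n : ℕ, n * x ≤ x ^ n
  | 0 => by simp
  | n + 1 =>
    calc ((n + 1 : ℕ) : R) * x ≤ 2 ^ n * x := by
          gcongr
          exact_mod_cast Nat.lt_two_pow_self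
      _ ≤ x ^ n * x := by gcongr
      _ = x ^ (n + 1) := (pow_succ x n).symm

theorem nat_mul_lt_pow (hx : 2 < x) {n : ℕ} (hn : 2 ≤ n) : n * x < x ^ n := by
  obtain ⟨m, rfl⟩ := Nat.exists_eq_add_of_le' hn
  have hx₀ : 0 < x := zero_lt_two.trans hx
  calc ((m + 1 + 1 : ℕ) : R) * x ≤ 2 ^ (m + 1) * x := by
        gcongr
        exact_mod_cast Nat.lt_two_pow_self
    _ < x ^ (m + 1) * x := by gcongr
    _ = x ^ (m + 1 + 1) := (pow_succ x _).symm

end PowBounds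

section Cost

variable {q : ℝ}

theorem cost_eq_sum_inv_pow (hq : 0 ≤ q) (l : List ℕ) :
    cost q l = (l.map fun n : ℕ => q⁻¹ ^ n).sum := by
  -- `cost` maps over `l` coerced to `List ℝ`, which elaborates as a bind in the list monad.
  simp only [cost, List.bind_eq_flatMap, List.pure_def, ← List.map_eq_flatMap, List.map_map]
  congr 1 with n
  simp [Real.rpow_neg hq]

theorem sum_div_eq_sum_mul_inv (l : List ℕ) :
    (l.sum : ℝ) / q = (l.map fun n : ℕ => (n : ℝ) * q⁻¹).sum := by
  rw [Nat.cast_list_sum, List.sum_map_mul_right, div_eq_mul_inv]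

theorem sum_div_le_cost (hq₀ : 0 < q) (hq : q ≤ 1 / 2) (l : List ℕ) :
    (l.sum : ℝ) / q ≤ cost q l := by
  have hx : 2 ≤ q⁻¹ := by
    rw [le_inv_comm₀ two_pos hq₀]; linarith
  rw [sum_div_eq_sum_mul_inv, cost_eq_sum_inv_pow hq₀.le]
  exact List.sum_le_sum fun n _ => nat_mul_le_pow hx n

theorem sum_div_lt_cost (hq₀ : 0 < q) (hq : q < 1 / 2) {l : List ℕ} (hl : ∃ n ∈ l, 2 ≤ n) :
    (l.sum : ℝ) / q < cost q l := by
  have hx : 2 < q⁻¹ := by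
    rw [lt_inv_comm₀ two_pos hq₀]; linarith
  obtain ⟨n, hn, hn₂⟩ := hl
  rw [sum_div_eq_sum_mul_inv, cost_eq_sum_inv_pow hq₀.le]
  exact List.sum_lt_sum _ _ (fun m _ => nat_mul_le_pow hx.le m) ⟨n, hn, nat_mul_lt_pow hx hn₂⟩

end Cost

theorem stmt_12_general (q : ℝ) (hq : q ∈ Set.Ioc (0 : ℝ) (1 / 2))
    (N : ℕ)
    (l : List ℕ) (hsum : l.sum = N) :
    (N : ℝ) / q ≤ cost q l ∧
    (q < 1 / 2 → (∃ n ∈ l, 2 ≤ n) → (N : ℝ) / q < cost q l) := by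
  subst hsum
  exact ⟨sum_div_le_cost hq.1 hq.2 l, fun hq₂ hl => sum_div_lt_cost hq.1 hq₂ hl⟩

/-- For `q ∈ (0, 1/2]` every composition of `N ≥ 1` into positive parts has cost at
least `N / q`, and for `q < 1/2` the inequality is strict as soon as some part is `≥ 2`;
that is, for `q < 1/2` individual testing (all parts equal to `1`) is uniquely optimal. -/
theorem stmt_12 (q : ℝ) (hq : q ∈ Set.Ioc (0 : ℝ) (1 / 2))
    (N : ℕ) (hN : 1 ≤ N)
    (l : List ℕ) (hpos : ∀ n ∈ l, 0 < n) (hsum : l.sum = N) :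
    (N : ℝ) / q ≤ cost q l ∧
    (q < 1 / 2 → (∃ n ∈ l, 2 ≤ n) → (N : ℝ) / q < cost q l) :=
  stmt_12_general q hq N l hsum
end

section
/- Let q ∈ (1/2, 1), set n** = 1/ln(1/q) and n* = ⌊n**⌋, let N ≥ 1, s = ⌊N/n*⌋, θ = N − s·n*, and assume θ ≥ 1 and s + 1 ≤ N. Define g(k) = (k − (N mod k))·q^{−⌊N/k⌋} + (N mod k)·q^{−⌈N/k⌉}. Then every finite list (n_1,…,n_I) of positive integers with n_1 + … + n_I = N and I > s + 1 satisfies q^{−n_1} + … + q^{−n_I} > g(s+1); that is, a composition into more than s+1 parts cannot be optimal. -/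
/-- Discrete tangent-line (chord) lower bound for `p^n`, `p > 1`. -/
lemma chord_le_pow {p : ℝ} (hp : 1 < p) (m n : ℕ) :
    p ^ m + ((n : ℝ) - m) * (p ^ (m + 1) - p ^ m) ≤ p ^ n := by
  have hp0 : 0 < p := by linarith
  rcases le_or_gt m n with h | h
  · obtain ⟨t, rfl⟩ := Nat.exists_eq_add_of_le h
    have hpm : (0:ℝ) < p ^ m := pow_pos hp0 m
    have hb : 1 + (t : ℝ) * (p - 1) ≤ p ^ t := by
      have := one_add_mul_le_pow (a := p - 1) (by linarith) t
      simpa using this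
    have e1 : p ^ (m + t) = p ^ m * p ^ t := pow_add p m t
    have e2 : p ^ (m + 1) = p ^ m * p := pow_succ p m
    rw [e1, e2]
    push_cast
    nlinarith [hpm, hb]
  · obtain ⟨t, rfl⟩ := Nat.exists_eq_add_of_le h.le
    have key : p ^ t * (1 - (t : ℝ) * (p - 1)) ≤ 1 := by
      rcases le_or_gt (1 - (t : ℝ) * (p - 1)) 0 with h0 | h0
      · have : (0:ℝ) < p ^ t := pow_pos hp0 t
        nlinarith
      · have h1 : p ^ t ≤ Real.exp ((t : ℝ) * (p - 1)) := by
          have hpe : p ≤ Real.exp (p - 1) := by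
            have := Real.add_one_le_exp (p - 1); linarith
          calc p ^ t ≤ (Real.exp (p - 1)) ^ t := pow_le_pow_left₀ hp0.le hpe t
            _ = Real.exp ((t : ℝ) * (p - 1)) := by rw [← Real.exp_nat_mul]
        have h2 : 1 - (t : ℝ) * (p - 1) ≤ Real.exp (-((t : ℝ) * (p - 1))) := by
          have := Real.add_one_le_exp (-((t : ℝ) * (p - 1))); linarith
        calc p ^ t * (1 - (t : ℝ) * (p - 1))
            ≤ Real.exp ((t : ℝ) * (p - 1)) * Real.exp (-((t : ℝ) * (p - 1))) :=
              mul_le_mul h1 h2 h0.le (Real.exp_pos _).le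
          _ = 1 := by rw [← Real.exp_add]; simp
    have hpn : (0:ℝ) < p ^ n := pow_pos hp0 n
    have e1 : p ^ (n + t) = p ^ n * p ^ t := pow_add p n t
    have e2 : p ^ (n + t + 1) = p ^ n * p ^ t * p := by rw [pow_succ, e1]
    rw [e1, e2]
    push_cast
    nlinarith [key, hpn, pow_pos hp0 t]

lemma sum_affine (A B : ℝ) (l : List ℕ) :
    (l.map fun n : ℕ => A + B * (n : ℝ)).sum = A * l.length + B * l.sum := by
  induction l with
  | nil => simp
  | cons a l ih =>
    simp only [List.map_cons, List.sum_cons, List.length_cons, ih]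
    push_cast
    ring

lemma cost_eq (q : ℝ) (l : List ℕ) : cost q l = (l.map fun n : ℕ => q ^ (-(n : ℝ))).sum := by
  unfold cost
  induction l with
  | nil => simp
  | cons a l ih => simp_all

/-- For `q ∈ (1/2, 1)`, `n* = ⌊n**⌋`, `N ≥ 1`, `s = ⌊N/n*⌋`, `θ = N - s·n* ≥ 1`,
`s + 1 ≤ N`, and `g k` the cost of the near-balanced composition of `N` into `k`
parts: every composition of `N` into more than `s + 1` parts has cost strictly
greater than `g (s + 1)`. -/
theorem stmt_14 (q : ℝ) (hq : q ∈ Set.Ioo (1 / 2 : ℝ) 1)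
    (nss : ℝ) (hnss : nss = 1 / Real.log (1 / q))
    (ns : ℕ) (hns : ns = ⌊nss⌋₊)
    (N s θ : ℕ) (hN : 1 ≤ N) (hs : s = N / ns) (hθ : θ = N - s * ns) (hθ1 : 1 ≤ θ)
    (hsN : s + 1 ≤ N)
    (g : ℕ → ℝ)
    (hg : ∀ k : ℕ, 1 ≤ k → k ≤ N →
      g k = ((k - N % k : ℕ) : ℝ) * q ^ (-((N / k : ℕ) : ℝ)) +
            ((N % k : ℕ) : ℝ) * q ^ (-(((N + k - 1) / k : ℕ) : ℝ)))
    (l : List ℕ) (hpos : ∀ n ∈ l, 0 < n) (hsum : l.sum = N) (hlen : s + 1 < l.length) :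
    g (s + 1) < cost q l := by
  obtain ⟨hq1, hq2⟩ := hq
  have hq0 : 0 < q := by linarith
  set p : ℝ := q⁻¹ with hpdef
  have hp : 1 < p := (one_lt_inv₀ hq0).mpr hq2
  have hpq : p * q = 1 := inv_mul_cancel₀ hq0.ne'
  have hrw : ∀ n : ℕ, q ^ (-(n : ℝ)) = p ^ n := by
    intro n
    rw [Real.rpow_neg hq0.le, Real.rpow_natCast, ← inv_pow]
  -- log facts
  have hinv1 : 1 < 1 / q := by rw [one_div]; exact hp
  have hlog_pos : 0 < Real.log (1 / q) := Real.log_pos hinv1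
  have hlog_gt : 1 - q < Real.log (1 / q) := by
    have := Real.log_lt_sub_one_of_pos hq0 hq2.ne
    rw [one_div, Real.log_inv]; linarith
  have hlog_lt1 : Real.log (1 / q) < 1 := by
    have h2 : (1:ℝ) / q < 2 := by rw [div_lt_iff₀ hq0]; linarith
    have := Real.log_lt_sub_one_of_pos (by linarith : (0:ℝ) < 1/q) (ne_of_gt hinv1)
    linarith
  have hns1 : 1 ≤ ns := by
    rw [hns]
    have h1 : (1:ℝ) ≤ nss := by
      rw [hnss, le_div_iff₀ hlog_pos]; linarith
    exact Nat.le_floor (by exact_mod_cast h1)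
  have hns_le : (ns : ℝ) ≤ nss := by
    rw [hns]
    exact Nat.floor_le (by rw [hnss]; positivity)
  -- N < (s+1) * ns
  have hNlt : N < (s + 1) * ns := by
    rw [hs]
    exact (Nat.div_lt_iff_lt_mul (by omega)).mp (lt_add_one _)
  set m : ℕ := N / (s + 1) with hmdef
  set r : ℕ := N % (s + 1) with hrdef
  have hr_lt : r < s + 1 := Nat.mod_lt _ (by omega)
  have hNeq : (s + 1) * m + r = N := Nat.div_add_mod N (s + 1)
  have hm_lt : m < ns := Nat.div_lt_of_lt_mul (by rw [Nat.mul_comm] at hNlt ⊢; exact hNlt)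
  -- key smallness: m * (p - 1) < 1
  have hmr : (m : ℝ) * (p - 1) < 1 := by
    have hm_le : (m : ℝ) ≤ nss - 1 := by
      have : (m : ℝ) + 1 ≤ (ns : ℝ) := by exact_mod_cast hm_lt
      linarith
    have hnss_lt : nss * (1 - q) < 1 := by
      have h1 : nss < 1 / (1 - q) := by
        rw [hnss]
        exact one_div_lt_one_div_of_lt (by linarith) hlog_gt
      rw [lt_div_iff₀ (by linarith : (0:ℝ) < 1 - q)] at h1
      exact h1
    have e : q * (p - 1) = 1 - q := by
      have h' : q * p = 1 := by linarith [hpq]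
      nlinarith
    have hp1 : 0 < p - 1 := by linarith
    nlinarith [mul_le_mul_of_nonneg_right hm_le hp1.le, hq0, hnss_lt, e]
  set B : ℝ := p ^ (m + 1) - p ^ m with hBdef
  set A : ℝ := p ^ m - (m : ℝ) * B with hAdef
  have hpm : (0:ℝ) < p ^ m := pow_pos (by linarith) m
  have hBgt : 0 < B := by
    rw [hBdef]
    have : p ^ m < p ^ (m + 1) := pow_lt_pow_right₀ hp (by omega)
    linarith
  have hBeq : B = p ^ m * (p - 1) := by rw [hBdef]; ring
  have hA : 0 < A := by
    rw [hAdef, hBeq]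
    have e : p ^ m - (m:ℝ) * (p ^ m * (p - 1)) = p ^ m * (1 - (m:ℝ) * (p - 1)) := by ring
    rw [e]
    exact mul_pos hpm (by linarith)
  -- lower bound on cost
  have hcost : A * l.length + B * N ≤ cost q l := by
    have h1 : (l.map fun n : ℕ => A + B * (n : ℝ)).sum ≤ (l.map fun n : ℕ => q ^ (-(n : ℝ))).sum := by
      apply List.sum_le_sum
      intro i _
      rw [hrw i]
      have hch := chord_le_pow hp m i
      rw [hAdef, hBdef]
      have e : p ^ m - (m:ℝ) * (p ^ (m+1) - p ^ m) + (p ^ (m+1) - p ^ m) * (i:ℝ)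
          = p ^ m + ((i:ℝ) - m) * (p ^ (m+1) - p ^ m) := by ring
      linarith [hch, e]
    rw [sum_affine, hsum] at h1
    rw [cost_eq]
    exact h1
  -- value of g (s+1)
  have hgval : g (s + 1) = A * (s + 1) + B * N := by
    rw [hg (s + 1) (by omega) hsN, hrw, hrw]
    rcases Nat.eq_zero_or_pos r with h0 | h0
    · have hceil : (N + (s + 1) - 1) / (s + 1) = m := by
        have h1 : N + (s + 1) - 1 = (s + 1) * m + s := by omega
        rw [h1, Nat.mul_add_div (by omega), Nat.div_eq_of_lt (by omega : s < s + 1)]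
        omega
      rw [hceil, ← hmdef, ← hrdef, h0]
      have hN' : (N : ℝ) = ((s:ℝ) + 1) * m := by
        have hN2 : N = (s + 1) * m := by omega
        rw [hN2]; push_cast; ring
      rw [hAdef, hBdef, hN']
      push_cast
      ring
    · have hceil : (N + (s + 1) - 1) / (s + 1) = m + 1 := by
        have h1 : N + (s + 1) - 1 = (s + 1) * m + (r + s) := by omega
        have h2 : (r + s) / (s + 1) = 1 := by
          apply Nat.div_eq_of_lt_le <;> omega
        rw [h1, Nat.mul_add_div (by omega), h2]
      rw [hceil, ← hmdef, ← hrdef]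
      have hsub : ((s + 1 - r : ℕ) : ℝ) = (s : ℝ) + 1 - r := by
        have hr' : r ≤ s + 1 := by omega
        push_cast [hr']; ring
      have hN' : (N : ℝ) = ((s:ℝ) + 1) * m + r := by
        rw [← hNeq]; push_cast; ring
      rw [hsub, hAdef, hBdef, hN']
      push_cast
      ring
  -- conclude
  have hlen' : ((s:ℝ) + 1) < (l.length : ℝ) := by exact_mod_cast hlen
  have hmono : A * ((s:ℝ) + 1) < A * l.length := mul_lt_mul_of_pos_left hlen' hA
  calc g (s + 1) = A * (s + 1) + B * N := hgval
    _ < A * l.length + B * N := by push_cast; linarith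
    _ ≤ cost q l := hcost
end
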